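/- Let Q be the maximum entropy distribution q(x_1, x_2, y) = p(x_1, y) p(x_2, y) / p(y). Then the conditional mutual information I_Q(X_1; Y | X_2) equals zero if and only if X_1 and Y are independent under p. -/

import Mathlib

/-!
Under `Q` the pairs `(X₁,Y)` and `(X₂,Y)` keep their `p`-marginals. `I_Q(X₁;Y|X₂)` is the
Kullback–Leibler divergence of `Q` from `q(x₁,x₂) q(x₂,y) / q(x₂)`, so by Gibbs' inequality it
vanishes iff `X₁ → X₂ → Y` is a Markov chain under `Q`, i.e. iff `p(x₁|y) = q(x₁|x₂)` for all
`x₁, x₂, y`. Both sides then equal `p(x₁)`: the left one does not depend on `x₂` and summing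
`p(x₁,y) p(x₂) = q(x₁,x₂) p(y)` over `x₂` gives `p(x₁,y) = p(x₁) p(y)`. Conversely, independence
makes `Q = p(x₁) p(x₂,y)`, which is Markov.
-/

/-- Shannon entropy of a distribution `q` on a finite type (natural logarithm). -/
noncomputable def entD {α : Type} [Fintype α] (q : α → ℝ) : ℝ :=
  ∑ x, -(q x * Real.log (q x))

/-- Marginal distribution of the first two coordinates. -/
def mAB {A B C : Type} [Fintype C] (q : A × B × C → ℝ) : A × B → ℝ :=
  fun x => ∑ c, q (x.1, x.2, c)

/-- Marginal distribution of the first and third coordinates. -/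
def mAC {A B C : Type} [Fintype B] (q : A × B × C → ℝ) : A × C → ℝ :=
  fun x => ∑ b, q (x.1, b, x.2)

/-- Marginal distribution of the second and third coordinates. -/
def mBC {A B C : Type} [Fintype A] (q : A × B × C → ℝ) : B × C → ℝ :=
  fun x => ∑ a, q (a, x.1, x.2)

/-- Marginal distribution of the first coordinate. -/
def mA {A B C : Type} [Fintype B] [Fintype C] (q : A × B × C → ℝ) : A → ℝ :=
  fun a => ∑ b, ∑ c, q (a, b, c)

/-- Marginal distribution of the second coordinate. -/
def mB {A B C : Type} [Fintype A] [Fintype C] (q : A × B × C → ℝ) : B → ℝ :=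
  fun b => ∑ a, ∑ c, q (a, b, c)

/-- Marginal distribution of the third coordinate (the target). -/
def mC {A B C : Type} [Fintype A] [Fintype B] (q : A × B × C → ℝ) : C → ℝ :=
  fun c => ∑ a, ∑ b, q (a, b, c)

/-- The distribution making `X₁` and `X₂` conditionally independent given `Y`,
`q(x₁,x₂,y) = p(x₁,y) p(x₂,y) / p(y)`: the maximum entropy distribution subject to the
pairwise source-target marginal constraints. -/
noncomputable def Qstar {A B C : Type} [Fintype A] [Fintype B]
    (p : A × B × C → ℝ) : A × B × C → ℝ :=
  fun x => mAC p (x.1, x.2.2) * mBC p (x.2.1, x.2.2) / mC p x.2.2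

/-- Mutual information between the two sources `I(X₁;X₂)` under `q`. -/
noncomputable def miAB {A B C : Type} [Fintype A] [Fintype B] [Fintype C]
    (q : A × B × C → ℝ) : ℝ :=
  entD (mA q) + entD (mB q) - entD (mAB q)

/-- Mutual information `I(X₁;Y)` under `q`. -/
noncomputable def miAC {A B C : Type} [Fintype A] [Fintype B] [Fintype C]
    (q : A × B × C → ℝ) : ℝ :=
  entD (mA q) + entD (mC q) - entD (mAC q)

/-- Mutual information `I(X₂;Y)` under `q`. -/
noncomputable def miBC {A B C : Type} [Fintype A] [Fintype B] [Fintype C]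
    (q : A × B × C → ℝ) : ℝ :=
  entD (mB q) + entD (mC q) - entD (mBC q)

/-- Conditional mutual information `I(X₁;X₂|Y)` under `q`. -/
noncomputable def cmiABgC {A B C : Type} [Fintype A] [Fintype B] [Fintype C]
    (q : A × B × C → ℝ) : ℝ :=
  entD (mAC q) + entD (mBC q) - entD (mC q) - entD q

/-- Conditional mutual information `I(X₁;Y|X₂)` under `q`. -/
noncomputable def cmiACgB {A B C : Type} [Fintype A] [Fintype B] [Fintype C]
    (q : A × B × C → ℝ) : ℝ :=
  entD (mAB q) + entD (mBC q) - entD (mB q) - entD q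

/-- Coinformation `I(X₁;X₂;Y) = I(X₁;X₂) − I(X₁;X₂|Y)` under `q`. -/
noncomputable def coI {A B C : Type} [Fintype A] [Fintype B] [Fintype C]
    (q : A × B × C → ℝ) : ℝ :=
  miAB q - cmiABgC q

open Finset Real InformationTheory

theorem sum_mul_log_div_eq_zero_iff {ι : Type} [Fintype ι] {q r : ι → ℝ}
    (hq : ∀ i, 0 ≤ q i) (hr : ∀ i, 0 < r i) (hsum : ∑ i, q i = ∑ i, r i) :
    ∑ i, q i * log (q i / r i) = 0 ↔ ∀ i, q i = r i := by
  -- `r * klFun (q / r) = q log (q / r) + r - q`, and the linear terms cancel in the sum.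
  have hkl : ∑ i, q i * log (q i / r i) = ∑ i, r i * klFun (q i / r i) := by
    have hterm : ∀ i, r i * klFun (q i / r i) = q i * log (q i / r i) + r i - q i := by
      intro i
      rw [klFun]
      field_simp [(hr i).ne']
    simp only [hterm, sum_sub_distrib, sum_add_distrib, hsum, add_sub_cancel_right]
  have hnonneg : ∀ i ∈ univ, 0 ≤ r i * klFun (q i / r i) := fun i _ =>
    mul_nonneg (hr i).le (klFun_nonneg (div_nonneg (hq i) (hr i).le))
  rw [hkl, sum_eq_zero_iff_of_nonneg hnonneg]
  refine forall_congr' fun i => ?_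
  rw [mul_eq_zero, klFun_eq_zero_iff (div_nonneg (hq i) (hr i).le),
    div_eq_one_iff_eq (hr i).ne']
  simp [(hr i).ne']

section Marginals

variable {A B C : Type} [Fintype A] [Fintype B] [Fintype C] (q : A × B × C → ℝ)

theorem sum_mul_mAB (g : A × B → ℝ) :
    ∑ x, q x * g (x.1, x.2.1) = ∑ ab, mAB q ab * g ab := by
  simp only [mAB, Fintype.sum_prod_type, sum_mul]

theorem sum_mul_mBC (g : B × C → ℝ) :
    ∑ x, q x * g (x.2.1, x.2.2) = ∑ bc, mBC q bc * g bc := by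
  simp only [mBC, Fintype.sum_prod_type, sum_mul]
  exact sum_comm.trans (sum_congr rfl fun _ _ => sum_comm)

theorem sum_mB : ∑ b, mB q b = ∑ x, q x := by
  simp only [mB, Fintype.sum_prod_type]
  exact sum_comm

theorem sum_mul_mB (g : B → ℝ) :
    ∑ x, q x * g x.2.1 = ∑ b, mB q b * g b := by
  simp only [mB, Fintype.sum_prod_type, sum_mul]
  exact sum_comm

end Marginals

theorem sum_mAB_left {A B C : Type} [Fintype A] [Fintype C] (q : A × B × C → ℝ) (b : B) :
    ∑ a, mAB q (a, b) = mB q b := rfl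

theorem sum_mBC_right {A B C : Type} [Fintype A] [Fintype C] (q : A × B × C → ℝ) (b : B) :
    ∑ c, mBC q (b, c) = mB q b := sum_comm

theorem sum_mBC_left {A B C : Type} [Fintype A] [Fintype B] (q : A × B × C → ℝ) (c : C) :
    ∑ b, mBC q (b, c) = mC q c := sum_comm

theorem sum_mAC_right {A B C : Type} [Fintype B] [Fintype C] (q : A × B × C → ℝ) (a : A) :
    ∑ c, mAC q (a, c) = mA q a := sum_comm

section Positivity

variable {A B C : Type} [Fintype A] [Fintype B] [Fintype C] {q : A × B × C → ℝ}
  (hq : ∀ x, 0 < q x) (x : A × B × C)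
include hq

omit [Fintype A] [Fintype B] in
theorem mAB_pos : 0 < mAB q (x.1, x.2.1) := sum_pos (fun _ _ => hq _) ⟨x.2.2, mem_univ _⟩

omit [Fintype B] [Fintype C] in
theorem mBC_pos : 0 < mBC q (x.2.1, x.2.2) := sum_pos (fun _ _ => hq _) ⟨x.1, mem_univ _⟩

omit [Fintype A] [Fintype C] in
theorem mAC_pos : 0 < mAC q (x.1, x.2.2) := sum_pos (fun _ _ => hq _) ⟨x.2.1, mem_univ _⟩

omit [Fintype B] in
theorem mB_pos : 0 < mB q x.2.1 :=
  sum_pos (fun a _ => mAB_pos hq (a, x.2)) ⟨x.1, mem_univ _⟩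

omit [Fintype C] in
theorem mC_pos : 0 < mC q x.2.2 :=
  sum_pos (fun a _ => mAC_pos hq (a, x.2)) ⟨x.1, mem_univ _⟩

end Positivity

section Markov

variable {A B C : Type} [Fintype A] [Fintype B] [Fintype C] (q : A × B × C → ℝ)

-- `X₁ → X₂ → Y` is a Markov chain under `q`, written without division.
def IsMarkovGivenB : Prop :=
  ∀ a b c, q (a, b, c) * mB q b = mAB q (a, b) * mBC q (b, c)

noncomputable def markovGivenB : A × B × C → ℝ :=
  fun x => mAB q (x.1, x.2.1) * mBC q (x.2.1, x.2.2) / mB q x.2.1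

theorem sum_markovGivenB : ∑ x, markovGivenB q x = ∑ x, q x := by
  calc ∑ x, markovGivenB q x
      = ∑ b, (∑ a, mAB q (a, b)) * (∑ c, mBC q (b, c)) / mB q b := by
        simp only [markovGivenB, Fintype.sum_prod_type, sum_mul_sum, sum_div]
        exact sum_comm
    _ = ∑ b, mB q b := by simp only [sum_mAB_left, sum_mBC_right, mul_self_div_self]
    _ = ∑ x, q x := sum_mB q

variable {q}

omit [Fintype B] in
theorem markovGivenB_pos (hq : ∀ x, 0 < q x) (x : A × B × C) : 0 < markovGivenB q x :=
  div_pos (mul_pos (mAB_pos hq x) (mBC_pos hq x)) (mB_pos hq x)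

theorem cmiACgB_eq_sum_mul_log_div (hq : ∀ x, 0 < q x) :
    cmiACgB q = ∑ x, q x * log (q x / markovGivenB q x) := by
  have hent : ∀ {α : Type} [Fintype α] (m : α → ℝ), entD m = -∑ y, m y * log (m y) := by
    intro α _ m
    rw [entD, sum_neg_distrib]
  rw [cmiACgB, hent, hent, hent, hent, ← sum_mul_mAB q (fun ab => log (mAB q ab)),
    ← sum_mul_mBC q (fun bc => log (mBC q bc)), ← sum_mul_mB q (fun b => log (mB q b))]
  simp only [← sum_sub_distrib, ← sum_add_distrib, ← sum_neg_distrib]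
  refine sum_congr rfl fun x _ => ?_
  rw [log_div (hq x).ne' (markovGivenB_pos hq x).ne', markovGivenB,
    log_div (mul_pos (mAB_pos hq x) (mBC_pos hq x)).ne' (mB_pos hq x).ne',
    log_mul (mAB_pos hq x).ne' (mBC_pos hq x).ne']
  ring

theorem cmiACgB_eq_zero_iff (hq : ∀ x, 0 < q x) : cmiACgB q = 0 ↔ IsMarkovGivenB q := by
  rw [cmiACgB_eq_sum_mul_log_div hq, sum_mul_log_div_eq_zero_iff (fun x => (hq x).le)
    (markovGivenB_pos hq) (sum_markovGivenB q).symm]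
  simp only [Prod.forall, markovGivenB, IsMarkovGivenB]
  refine forall_congr' fun a => forall_congr' fun b => forall_congr' fun c => ?_
  rw [eq_div_iff (mB_pos hq (a, b, c)).ne']

end Markov

section Qstar

variable {A B C : Type} [Fintype A] [Fintype B] [Fintype C] {p : A × B × C → ℝ}

omit [Fintype C] in
theorem Qstar_pos (hp : ∀ x, 0 < p x) (x : A × B × C) : 0 < Qstar p x :=
  div_pos (mul_pos (mAC_pos hp x) (mBC_pos hp x)) (mC_pos hp x)

omit [Fintype C] in
theorem mBC_Qstar (hC : ∀ c, mC p c ≠ 0) : mBC (Qstar p) = mBC p := by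
  ext ⟨b, c⟩
  simp only [mBC, Qstar, ← sum_div, ← sum_mul]
  exact mul_div_cancel_left₀ _ (hC c)

omit [Fintype C] in
theorem mAC_Qstar (hC : ∀ c, mC p c ≠ 0) : mAC (Qstar p) = mAC p := by
  ext ⟨a, c⟩
  simp only [mAC, Qstar, ← sum_div, ← mul_sum]
  rw [sum_mBC_left, mul_div_cancel_right₀ _ (hC c)]

theorem mB_Qstar (hC : ∀ c, mC p c ≠ 0) : mB (Qstar p) = mB p := by
  ext b
  rw [← sum_mBC_right, mBC_Qstar hC, sum_mBC_right]

theorem mA_Qstar (hC : ∀ c, mC p c ≠ 0) : mA (Qstar p) = mA p := by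
  ext a
  rw [← sum_mAC_right, mAC_Qstar hC, sum_mAC_right]

theorem isMarkovGivenB_Qstar_of_indep (hC : ∀ c, mC p c ≠ 0)
    (hind : ∀ a c, mAC p (a, c) = mA p a * mC p c) : IsMarkovGivenB (Qstar p) := by
  have hQ : ∀ a b c, Qstar p (a, b, c) = mA p a * mBC p (b, c) := fun a b c => by
    simp only [Qstar, hind, mul_right_comm _ (mC p c), mul_div_cancel_right₀ _ (hC c)]
  have hAB : ∀ a b, mAB (Qstar p) (a, b) = mA p a * mB p b := fun a b => by
    simp only [mAB, hQ, ← mul_sum, sum_mBC_right]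
  intro a b c
  rw [mB_Qstar hC, mBC_Qstar hC, hQ, hAB]
  ring

theorem indep_of_isMarkovGivenB_Qstar (hp : ∀ x, 0 < p x) (hC : ∀ c, mC p c ≠ 0)
    (hsum : ∑ x, p x = 1) (hM : IsMarkovGivenB (Qstar p)) (a : A) (c : C) :
    mAC p (a, c) = mA p a * mC p c := by
  have hb : ∀ b, mAC p (a, c) * mB p b = mAB (Qstar p) (a, b) * mC p c := fun b => by
    have h := hM a b c
    rw [mB_Qstar hC, mBC_Qstar hC] at h
    simp only [Qstar] at h
    field_simp [hC c] at h
    exact mul_right_cancel₀ (mBC_pos hp (a, b, c)).ne' (by linear_combination h)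
  calc mAC p (a, c) = mAC p (a, c) * ∑ b, mB p b := by rw [sum_mB, hsum, mul_one]
    _ = ∑ b, mAB (Qstar p) (a, b) * mC p c := by rw [mul_sum]; exact sum_congr rfl fun b _ => hb b
    _ = mA p a * mC p c := by rw [← sum_mul, ← mA_Qstar hC]; rfl

end Qstar

/-- Let `Q` be the maximum entropy distribution
`q(x₁,x₂,y) = p(x₁,y)p(x₂,y)/p(y)`. Then the conditional mutual information
`I_Q(X₁;Y|X₂)` equals zero if and only if `X₁` and `Y` are independent under `p`. -/
theorem cmi_under_Qstar_eq_zero_iff_independent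
    {A B C : Type} [Fintype A] [Fintype B] [Fintype C]
    (p : A × B × C → ℝ) (hpos : ∀ x, 0 < p x) (hsum : ∑ x, p x = 1) :
    cmiACgB (Qstar p) = 0 ↔ ∀ (a : A) (c : C), mAC p (a, c) = mA p a * mC p c := by
  obtain ⟨⟨a₀, b₀, -⟩, -⟩ := nonempty_of_sum_ne_zero (hsum.symm ▸ one_ne_zero : ∑ x, p x ≠ 0)
  have hC : ∀ c, mC p c ≠ 0 := fun c => (mC_pos hpos (a₀, b₀, c)).ne'
  rw [cmiACgB_eq_zero_iff (Qstar_pos hpos)]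
  exact ⟨indep_of_isMarkovGivenB_Qstar hpos hC hsum, isMarkovGivenB_Qstar_of_indep hC⟩
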